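/- arXiv:2303.03125 — 2 statements merged into one kernel-verified Lean document; each statement's English description precedes it below -/
import Mathlib

section
/- Let G be a finite connected simple graph, let F be a spanning forest of G, and let S be a set of edges of G, disjoint from the edges of F, that is minimal with respect to inclusion such that the spanning subgraph of G with edge set E(F) ∪ S is a spanning tree of G. Then any two distinct vertices that lie in the same connected component of the spanning subgraph of G with edge set S lie in distinct connected components of F. -/
/-- Let `G` be a finite connected simple graph, `F` a spanning forest of `G`, and `S` a set
of edges of `G`, disjoint from the edges of `F`, minimal with respect to inclusion such
that the spanning subgraph of `G` with edge set `E(F) ∪ S` is a spanning tree of `G`.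
Then any two distinct vertices lying in the same connected component of the spanning
subgraph with edge set `S` lie in distinct connected components of `F`. -/
theorem minimal_augmentation_distinct_components {V : Type*} [Fintype V] (G : SimpleGraph V)
    (hG : G.Connected) (F : SimpleGraph V) (hFG : F ≤ G) (hF : F.IsAcyclic)
    (S : Set (Sym2 V)) (hS : S ⊆ G.edgeSet) (hdisj : Disjoint S F.edgeSet)
    (hconn : (SimpleGraph.fromEdgeSet (F.edgeSet ∪ S)).Connected)
    (hac : (SimpleGraph.fromEdgeSet (F.edgeSet ∪ S)).IsAcyclic)
    (hmin : ∀ S' ⊆ S, (SimpleGraph.fromEdgeSet (F.edgeSet ∪ S')).Connected →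
      (SimpleGraph.fromEdgeSet (F.edgeSet ∪ S')).IsAcyclic → S' = S) :
    ∀ u v : V, u ≠ v → (SimpleGraph.fromEdgeSet S).Reachable u v → ¬ F.Reachable u v := by
  intro u v huv ⟨ps⟩ ⟨pf⟩
  classical
  set U := SimpleGraph.fromEdgeSet (F.edgeSet ∪ S) with hU
  obtain ⟨ws, hws⟩ := ps.toPath
  obtain ⟨wf, hwf⟩ := pf.toPath
  have hps : ∀ e ∈ ws.edges, e ∈ U.edgeSet := by
    intro e he
    have := ws.edges_subset_edgeSet he
    rw [SimpleGraph.edgeSet_fromEdgeSet] at this ⊢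
    exact ⟨Or.inr this.1, this.2⟩
  have hpf : ∀ e ∈ wf.edges, e ∈ U.edgeSet := by
    intro e he
    have h1 := wf.edges_subset_edgeSet he
    rw [SimpleGraph.edgeSet_fromEdgeSet]
    exact ⟨Or.inl h1, F.not_isDiag_of_mem_edgeSet h1⟩
  set qs := ws.transfer U hps with hqs
  set qf := wf.transfer U hpf with hqf
  have heq : qs = qf :=
    congrArg Subtype.val (hac.path_unique ⟨qs, hws.transfer hps⟩ ⟨qf, hwf.transfer hpf⟩)
  have hedges : qs.edges = qf.edges := by rw [heq]
  rw [SimpleGraph.Walk.edges_transfer, SimpleGraph.Walk.edges_transfer] at hedges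
  -- ws has an edge since u ≠ v
  cases ws with
  | nil => exact huv rfl
  | cons h p =>
    rename_i w
    have hmem : s(u, w) ∈ wf.edges := by
      rw [← hedges]; exact List.mem_cons_self
    have h1 : s(u, w) ∈ S := by
      rw [SimpleGraph.fromEdgeSet_adj] at h; exact h.1
    have h2 : s(u, w) ∈ F.edgeSet := wf.edges_subset_edgeSet hmem
    exact Set.disjoint_left.mp hdisj h1 h2
end

section
/- Let T be a finite tree and let F be a spanning subgraph of T (so F is a forest obtained from T by deleting some edges) with exactly c connected components. Suppose that every edge of T that is not an edge of F has at most one endpoint that is a leaf of F. Then |L(F)| ≤ |L(T)| + c − 1. -/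
open SimpleGraph

/-- Splitting a walk at occurrences of a deleted edge. -/
lemma walk_split {V : Type*} {G : SimpleGraph V} {u v a b : V}
    (p : G.Walk a b) :
    (G.deleteEdges {s(u,v)}).Reachable a b ∨
      (G.deleteEdges {s(u,v)}).Reachable a u ∨ (G.deleteEdges {s(u,v)}).Reachable a v := by
  induction p with
  | nil => exact Or.inl (Reachable.refl _)
  | @cons a a₁ b h p ih =>
    by_cases he : s(a, a₁) = s(u, v)
    · rcases Sym2.eq_iff.mp he with ⟨rfl, rfl⟩ | ⟨rfl, rfl⟩
      · exact Or.inr (Or.inl (Reachable.refl _))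
      · exact Or.inr (Or.inr (Reachable.refl _))
    · have h' : (G.deleteEdges {s(u,v)}).Adj a a₁ := by
        rw [deleteEdges_adj]
        exact ⟨h, by simpa using he⟩
      rcases ih with h1 | h1 | h1
      · exact Or.inl (h'.reachable.trans h1)
      · exact Or.inr (Or.inl (h'.reachable.trans h1))
      · exact Or.inr (Or.inr (h'.reachable.trans h1))

/-- Deleting one edge increases the number of connected components by at most one. -/
lemma card_cc_deleteEdge_le {V : Type*} [Fintype V] (G : SimpleGraph V) (u v : V) :
    Nat.card (G.deleteEdges {s(u,v)}).ConnectedComponent ≤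
      Nat.card G.ConnectedComponent + 1 := by
  classical
  set G' := G.deleteEdges {s(u,v)} with hG'
  have hle : G' ≤ G := deleteEdges_le _
  let f : G'.ConnectedComponent → G.ConnectedComponent ⊕ Unit := fun C =>
    if C = G'.connectedComponentMk v then Sum.inr ()
    else Sum.inl (C.map (SimpleGraph.Hom.ofLE hle))
  have hinj : Function.Injective f := by
    intro C₁ C₂ hf
    by_cases h1 : C₁ = G'.connectedComponentMk v
    · by_cases h2 : C₂ = G'.connectedComponentMk v
      · rw [h1, h2]
      · simp only [f, if_pos h1, if_neg h2] at hf
        simp at hf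
    · by_cases h2 : C₂ = G'.connectedComponentMk v
      · simp only [f, if_neg h1, if_pos h2] at hf
        simp at hf
      · simp only [f, if_neg h1, if_neg h2, Sum.inl.injEq] at hf
        revert h1 h2 hf
        refine SimpleGraph.ConnectedComponent.ind₂ (fun a b => ?_) C₁ C₂
        intro h1 h2 hmap
        have hrab : G.Reachable a b := SimpleGraph.ConnectedComponent.eq.mp (by
          simpa using hmap)
        have hav : ¬ G'.Reachable a v := fun h => h1 (SimpleGraph.ConnectedComponent.eq.mpr h)
        have hbv : ¬ G'.Reachable b v := fun h => h2 (SimpleGraph.ConnectedComponent.eq.mpr h)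
        refine SimpleGraph.ConnectedComponent.eq.mpr ?_
        obtain ⟨w⟩ := hrab
        rcases walk_split (u := u) (v := v) w with h | h | h
        · exact h
        · rcases walk_split (u := u) (v := v) w.reverse with h' | h' | h'
          · exact h'.symm
          · exact h.trans h'.symm
          · exact absurd h' hbv
        · exact absurd h hav
  calc Nat.card G'.ConnectedComponent
      ≤ Nat.card (G.ConnectedComponent ⊕ Unit) := Nat.card_le_card_of_injective f hinj
    _ = Nat.card G.ConnectedComponent + 1 := by simp [Nat.card_sum]

/-- Number of components is at least vertices minus edges. -/
lemma card_le_ncard_add_card_cc {V : Type*} [Fintype V] :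
    ∀ (n : ℕ) (G : SimpleGraph V), G.edgeSet.ncard = n →
      Fintype.card V ≤ n + Nat.card G.ConnectedComponent := by
  intro n
  induction n with
  | zero =>
    intro G hG
    have hfin : G.edgeSet.Finite := Set.toFinite _
    have : G.edgeSet = ∅ := (Set.ncard_eq_zero hfin).mp hG
    have hGbot : G = ⊥ := SimpleGraph.edgeSet_eq_empty.mp this
    subst hGbot
    have : Nat.card (⊥ : SimpleGraph V).ConnectedComponent = Fintype.card V := by
      rw [← Nat.card_eq_fintype_card]
      refine (Nat.card_eq_of_bijective (⊥ : SimpleGraph V).connectedComponentMk ?_).symm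
      constructor
      · intro a b hab
        exact SimpleGraph.reachable_bot.mp (SimpleGraph.ConnectedComponent.eq.mp hab)
      · exact SimpleGraph.ConnectedComponent.ind (fun a => ⟨a, rfl⟩)
    omega
  | succ n ih =>
    intro G hG
    have hne : G.edgeSet.Nonempty := by
      rw [Set.nonempty_iff_ne_empty]
      intro h
      rw [h] at hG
      simp at hG
    obtain ⟨e, he⟩ := hne
    induction e using Sym2.ind with
    | _ u v =>
      have hG' : (G.deleteEdges {s(u,v)}).edgeSet.ncard = n := by
        rw [SimpleGraph.edgeSet_deleteEdges]
        rw [Set.ncard_diff_singleton_of_mem he, hG]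
        omega
      have h1 := ih (G.deleteEdges {s(u,v)}) hG'
      have h2 := card_cc_deleteEdge_le G u v
      omega

/-- Let `T` be a finite tree and `F` a spanning subgraph of `T` with exactly `c` connected
components. Suppose every edge of `T` that is not an edge of `F` has at most one endpoint
that is a leaf of `F`. Then `|L(F)| ≤ |L(T)| + c - 1`. -/
theorem leaf_count_spanning_forest {V : Type*} [Fintype V] (T : SimpleGraph V)
    (hT : T.IsTree) (F : SimpleGraph V) (hFT : F ≤ T)
    (c : ℕ) (hc : Nat.card F.ConnectedComponent = c)
    (hedge : ∀ u v : V, T.Adj u v → ¬ F.Adj u v →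
      ¬ ((F.neighborSet u).ncard = 1 ∧ (F.neighborSet v).ncard = 1)) :
    ({v : V | (F.neighborSet v).ncard = 1}.ncard : ℤ) ≤
      {v : V | (T.neighborSet v).ncard = 1}.ncard + c - 1 := by
  classical
  -- basic counts
  have hTedge : T.edgeSet.ncard + 1 = Fintype.card V := by
    have := hT.card_edgeFinset
    rwa [SimpleGraph.edgeFinset, ← Set.ncard_eq_toFinset_card'] at this
  have hFcount : Fintype.card V ≤ F.edgeSet.ncard + c := by
    have := card_le_ncard_add_card_cc F.edgeSet.ncard F rfl
    omega
  have hsub : F.edgeSet ⊆ T.edgeSet := SimpleGraph.edgeSet_mono hFT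
  -- deleted edges
  set D : Set (Sym2 V) := T.edgeSet \ F.edgeSet with hD
  have hDcard : D.ncard + F.edgeSet.ncard = T.edgeSet.ncard := by
    rw [hD, Set.ncard_diff hsub (Set.toFinite _)]
    have : F.edgeSet.ncard ≤ T.edgeSet.ncard :=
      Set.ncard_le_ncard hsub (Set.toFinite _)
    omega
  have hDle : D.ncard ≤ c - 1 ∧ 1 ≤ c := by
    have hcpos : 0 < c := by
      have hne : Nonempty V := hT.isConnected.nonempty
      have : Nonempty F.ConnectedComponent :=
        ⟨F.connectedComponentMk (Classical.arbitrary V)⟩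
      rw [← hc]
      exact Nat.card_pos
    omega
  -- the set of F-leaves that are not T-leaves
  set S : Set V := {v : V | (F.neighborSet v).ncard = 1 ∧ (T.neighborSet v).ncard ≠ 1}
    with hS
  -- each v in S has an incident deleted edge
  have hex : ∀ v ∈ S, ∃ u, T.Adj v u ∧ ¬ F.Adj v u := by
    intro v hv
    by_contra hcon
    push_neg at hcon
    have heq : F.neighborSet v = T.neighborSet v := by
      apply Set.Subset.antisymm
      · exact fun u hu => hFT hu
      · exact fun u hu => hcon u hu
    exact hv.2 (heq ▸ hv.1)
  let φ : V → Sym2 V := fun v =>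
    if hv : ∃ u, T.Adj v u ∧ ¬ F.Adj v u then s(v, hv.choose) else s(v, v)
  have hφmem : ∀ v ∈ S, φ v ∈ D := by
    intro v hv
    have h := hex v hv
    simp only [φ, dif_pos h]
    obtain ⟨hTadj, hFadj⟩ := h.choose_spec
    exact ⟨hTadj, fun hF => hFadj hF⟩
  have hφinj : Set.InjOn φ S := by
    intro v₁ h₁ v₂ h₂ heq
    have hx1 := hex v₁ h₁
    have hx2 := hex v₂ h₂
    simp only [φ, dif_pos hx1, dif_pos hx2] at heq
    rcases Sym2.eq_iff.mp heq with ⟨h, _⟩ | ⟨ha, hb⟩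
    · exact h
    · -- v₁ = u_{v₂} and u_{v₁} = v₂ : the deleted edge joins two F-leaves
      exfalso
      obtain ⟨hT2, hF2⟩ := hx2.choose_spec
      rw [← ha] at hT2 hF2
      exact hedge v₂ v₁ hT2 hF2 ⟨h₂.1, h₁.1⟩
  have hScard : S.ncard ≤ D.ncard := by
    rw [← Set.ncard_image_of_injOn hφinj]
    exact Set.ncard_le_ncard (Set.image_subset_iff.mpr hφmem) (Set.toFinite _)
  -- leaves of F split into leaves of T and S
  have hsplit : {v : V | (F.neighborSet v).ncard = 1} ⊆
      {v : V | (T.neighborSet v).ncard = 1} ∪ S := by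
    intro v hv
    by_cases hTv : (T.neighborSet v).ncard = 1
    · exact Or.inl hTv
    · exact Or.inr ⟨hv, hTv⟩
  have hfinal : {v : V | (F.neighborSet v).ncard = 1}.ncard ≤
      {v : V | (T.neighborSet v).ncard = 1}.ncard + S.ncard := by
    calc {v : V | (F.neighborSet v).ncard = 1}.ncard
        ≤ ({v : V | (T.neighborSet v).ncard = 1} ∪ S).ncard :=
          Set.ncard_le_ncard hsplit (Set.toFinite _)
      _ ≤ _ := Set.ncard_union_le _ _
  have h1 := hDle.1
  have h2 := hDle.2
  omega
end
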